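/- On the Lie algebra 𝔤 with Chevalley–Eilenberg data dx₁=dx₂=0, dx₃=x₁∧x₂, dx₄=x₁∧x₃, the 2-form ω = x₁∧x₃ + x₄∧x₂ satisfies dω = θ∧ω where θ = x₂, and θ is closed; i.e., (ω, θ) defines a locally conformal symplectic structure at the Lie algebra level. -/
import Mathlib


/-- The bracket on ℝ⁴ consistent with the Chevalley–Eilenberg data dx₁=dx₂=0, dx₃=x₁∧x₂,
dx₄=x₁∧x₃, where dα(u,v) = -α([u,v]). -/
def ceBr (u v : Fin 4 → ℝ) : Fin 4 → ℝ :=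
  ![0, 0, -(u 0 * v 1 - u 1 * v 0), -(u 0 * v 2 - u 2 * v 0)]

/-- The 2-form ω = x₁∧x₃ + x₄∧x₂ (as a bilinear alternating form). -/
def omegaLCS (u v : Fin 4 → ℝ) : ℝ :=
  (u 0 * v 2 - u 2 * v 0) + (u 3 * v 1 - u 1 * v 3)

/-- The Lee form θ = x₂. -/
def leeForm (u : Fin 4 → ℝ) : ℝ := u 1

/-- On the Lie algebra with dx₁=dx₂=0, dx₃=x₁∧x₂, dx₄=x₁∧x₃, the 2-form ω = x₁∧x₃ + x₄∧x₂
satisfies dω = θ∧ω with θ = x₂, θ is closed, and ω is nondegenerate: (ω,θ) is a locally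
conformal symplectic structure at the Lie algebra level. -/
theorem lcs_structure :
    (∀ u v w : Fin 4 → ℝ,
      -omegaLCS (ceBr u v) w + omegaLCS (ceBr u w) v - omegaLCS (ceBr v w) u =
        leeForm u * omegaLCS v w - leeForm v * omegaLCS u w + leeForm w * omegaLCS u v) ∧
    (∀ u v : Fin 4 → ℝ, leeForm (ceBr u v) = 0) ∧
    (∀ u : Fin 4 → ℝ, (∀ v, omegaLCS u v = 0) → u = 0) := by
  refine ⟨fun u v w => ?_, fun u v => ?_, fun u h => ?_⟩
  · simp [ceBr, omegaLCS, leeForm]; ring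
  · simp [ceBr, leeForm]
  · have h0 := h ![0, 0, 1, 0]
    have h1 := h ![0, 0, 0, 1]
    have h2 := h ![1, 0, 0, 0]
    have h3 := h ![0, 1, 0, 0]
    simp [omegaLCS] at h0 h1 h2 h3
    funext i
    fin_cases i <;> simp_all
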